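/- Let 𝒢 be a GRN with associated PRN ℛ. A node τ ∈ V is an appendage node of 𝒢 if and only if both (τ,R) and (τ,P) are appendage nodes of ℛ. -/

import Mathlib

open List Relation

/- In the PRN on `V × Bool`, the node `(v, false)` is the mRNA node `v^R`
   and `(v, true)` is the protein node `v^P`. -/

/-- Arrow relation of the PRN associated to a GRN with arrow relation `E`:
arrows `(v,R) → (v,P)` for every `v`, and `(u,P) → (v,R)` whenever `E u v`. -/
def prnAdj {V : Type*} (E : V → V → Prop) : V × Bool → V × Bool → Prop :=
  fun a b =>
    (a.1 = b.1 ∧ a.2 = false ∧ b.2 = true) ∨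
    (E a.1 b.1 ∧ a.2 = true ∧ b.2 = false)

/-- The lift of a path `σ₁ → ⋯ → σ_m` in the GRN to the path
`(σ₁,R) → (σ₁,P) → ⋯ → (σ_m,R) → (σ_m,P)` in the PRN. -/
def liftPath {V : Type*} (l : List V) : List (V × Bool) :=
  l.flatMap fun v => [(v, false), (v, true)]

/-- A simple path: a nonempty directed path visiting each node at most once. -/
def IsSimplePath {V : Type*} (E : V → V → Prop) (l : List V) : Prop :=
  l ≠ [] ∧ l.Chain' E ∧ l.Nodup

/-- A simple path from `a` to `b`. -/
def IsSimplePathFrom {V : Type*} (E : V → V → Prop) (a b : V) (l : List V) : Prop :=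
  IsSimplePath E l ∧ l.head? = some a ∧ l.getLast? = some b

/-- A node is simple if it lies on some simple path from the input to the output. -/
def IsSimpleNode {V : Type*} (E : V → V → Prop) (ι o v : V) : Prop :=
  ∃ l, IsSimplePathFrom E ι o l ∧ v ∈ l

/-- A node is super-simple if it lies on every simple path from the input to the output. -/
def IsSuperSimpleNode {V : Type*} (E : V → V → Prop) (ι o v : V) : Prop :=
  ∀ l, IsSimplePathFrom E ι o l → v ∈ l

/-- A node is appendage if it lies on no simple path from the input to the output. -/
def IsAppendageNode {V : Type*} (E : V → V → Prop) (ι o v : V) : Prop :=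
  ¬ IsSimpleNode E ι o v

/-- An appendage path from `a` to `b`: a simple path from `a` to `b` each of whose
nodes, except possibly `a` and `b`, is an appendage node. -/
def IsAppendagePath {V : Type*} (E : V → V → Prop) (ι o a b : V) (l : List V) : Prop :=
  IsSimplePathFrom E a b l ∧ ∀ v ∈ l, v ≠ a → v ≠ b → IsAppendageNode E ι o v

/-- A directed cycle: a nonempty closed directed walk visiting each of its nodes
exactly once (a self-loop is a cycle of length one). -/
def IsCycle {V : Type*} (E : V → V → Prop) (c : List V) : Prop :=
  c ≠ [] ∧ c.Chain' E ∧ c.Nodup ∧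
    ∃ a b, c.head? = some a ∧ c.getLast? = some b ∧ E b a

/-- Arrow relation of the appendage subnetwork: the induced subgraph on appendage nodes. -/
def appendageAdj {V : Type*} (E : V → V → Prop) (ι o : V) : V → V → Prop :=
  fun a b => E a b ∧ IsAppendageNode E ι o a ∧ IsAppendageNode E ι o b

/-- Two appendage nodes are path-equivalent if each is reachable from the other by a
directed path lying entirely within the appendage subnetwork. -/
def PathEquiv {V : Type*} (E : V → V → Prop) (ι o a b : V) : Prop :=
  Relation.ReflTransGen (appendageAdj E ι o) a b ∧
  Relation.ReflTransGen (appendageAdj E ι o) b a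

/-- A node `x` is between `a` and `b` if some input-to-output simple path visits
`a`, `x`, `b` in that order. -/
def Between {V : Type*} (E : V → V → Prop) (ι o a x b : V) : Prop :=
  ∃ l, IsSimplePathFrom E ι o l ∧ [a, x, b].Sublist l

/-!
The simple paths of the PRN from `(ι,R)` to `(o,P)` are exactly the lifts
`(σ₁,R) → (σ₁,P) → ⋯ → (σ_m,R) → (σ_m,P)` of the `ιo`-simple paths `σ₁ → ⋯ → σ_m` of the GRN:
the only arrow out of `(v,R)` goes to `(v,P)`, and arrows out of `(u,P)` go to `R`-nodes `(v,R)`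
with `u → v`, so a path starting at an `R`-node and ending at a `P`-node consists of consecutive
pairs `(v,R),(v,P)`. Since both `(τ,R)` and `(τ,P)` occur in `liftPath l` exactly when `τ ∈ l`,
each of them lies on a PRN simple path iff `τ` lies on a GRN simple path.
-/

section LiftPath

variable {V : Type*} {E : V → V → Prop}

@[simp]
lemma liftPath_nil : liftPath ([] : List V) = [] := rfl

@[simp]
lemma liftPath_cons (v : V) (l : List V) :
    liftPath (v :: l) = (v, false) :: (v, true) :: liftPath l := rfl

@[simp]
lemma liftPath_eq_nil_iff {l : List V} : liftPath l = [] ↔ l = [] := by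
  cases l <;> simp

@[simp]
lemma mem_liftPath {v : V} {b : Bool} {l : List V} : (v, b) ∈ liftPath l ↔ v ∈ l := by
  induction l with
  | nil => simp
  | cons w l ih => cases b <;> simp [ih, eq_comm]

lemma head?_liftPath (l : List V) : (liftPath l).head? = l.head?.map (·, false) := by
  cases l <;> rfl

lemma getLast?_liftPath (l : List V) : (liftPath l).getLast? = l.getLast?.map (·, true) := by
  induction l with
  | nil => rfl
  | cons v l ih => cases l <;> simp_all

lemma prnAdj_false_left_iff {v : V} {x : V × Bool} : prnAdj E (v, false) x ↔ x = (v, true) := by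
  obtain ⟨w, b⟩ := x
  simp [prnAdj, eq_comm]

lemma prnAdj_true_left_iff {u v : V} {b : Bool} :
    prnAdj E (u, true) (v, b) ↔ E u v ∧ b = false := by
  simp [prnAdj]

@[simp]
lemma isChain_liftPath_iff {l : List V} : (liftPath l).IsChain (prnAdj E) ↔ l.IsChain E := by
  induction l with
  | nil => simp
  | cons v l ih =>
    cases l with
    | nil => simp [prnAdj]
    | cons w l =>
      rw [liftPath_cons, isChain_cons_cons, liftPath_cons, isChain_cons_cons, ← liftPath_cons, ih,
        isChain_cons_cons]
      simp [prnAdj]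

@[simp]
lemma nodup_liftPath_iff {l : List V} : (liftPath l).Nodup ↔ l.Nodup := by
  induction l with
  | nil => simp
  | cons v l ih => simp [ih]

lemma exists_eq_liftPath_of_isChain :
    ∀ {L : List (V × Bool)}, L.IsChain (prnAdj E) →
      (∀ a ∈ L.head?, a.2 = false) → (∀ b ∈ L.getLast?, b.2 = true) → ∃ l, L = liftPath l
  | [], _, _, _ => ⟨[], rfl⟩
  | [_], _, hhead, hlast => absurd ((hhead _ rfl).symm.trans (hlast _ rfl)) Bool.false_ne_true
  | (v, b) :: x :: rest, hchain, hhead, hlast => by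
    obtain rfl : b = false := hhead _ rfl
    obtain ⟨hvx, hrest⟩ := isChain_cons_cons.1 hchain
    obtain rfl := prnAdj_false_left_iff.1 hvx
    cases rest with
    | nil => exact ⟨[v], rfl⟩
    | cons y rest =>
      obtain ⟨w, c⟩ := y
      obtain ⟨hvw, hrest⟩ := isChain_cons_cons.1 hrest
      obtain ⟨-, rfl⟩ := prnAdj_true_left_iff.1 hvw
      obtain ⟨l, hl⟩ := exists_eq_liftPath_of_isChain hrest
        (fun _ ha => by rw [← Option.mem_some_iff.1 ha]) (fun b hb => hlast b (by simpa using hb))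
      exact ⟨v :: l, by rw [liftPath_cons, hl]⟩

lemma isSimplePath_liftPath_iff {l : List V} :
    IsSimplePath (prnAdj E) (liftPath l) ↔ IsSimplePath E l :=
  and_congr (not_congr liftPath_eq_nil_iff) (and_congr isChain_liftPath_iff nodup_liftPath_iff)

lemma isSimplePathFrom_liftPath_iff {ι o : V} {l : List V} :
    IsSimplePathFrom (prnAdj E) (ι, false) (o, true) (liftPath l) ↔ IsSimplePathFrom E ι o l :=
  and_congr isSimplePath_liftPath_iff (by simp [head?_liftPath, getLast?_liftPath])

lemma exists_eq_liftPath_of_isSimplePathFrom {ι o : V} {L : List (V × Bool)}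
    (h : IsSimplePathFrom (prnAdj E) (ι, false) (o, true) L) : ∃ l, L = liftPath l := by
  obtain ⟨⟨-, hchain, -⟩, hhead, hlast⟩ := h
  exact exists_eq_liftPath_of_isChain hchain (by simp [hhead]) (by simp [hlast])

lemma isSimpleNode_prnAdj_iff {ι o τ : V} (b : Bool) :
    IsSimpleNode (prnAdj E) (ι, false) (o, true) (τ, b) ↔ IsSimpleNode E ι o τ := by
  constructor
  · rintro ⟨L, hL, hτ⟩
    obtain ⟨l, rfl⟩ := exists_eq_liftPath_of_isSimplePathFrom hL
    exact ⟨l, isSimplePathFrom_liftPath_iff.1 hL, mem_liftPath.1 hτ⟩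
  · rintro ⟨l, hl, hτ⟩
    exact ⟨liftPath l, isSimplePathFrom_liftPath_iff.2 hl, mem_liftPath.2 hτ⟩

end LiftPath

theorem stmt_6_general {V : Type*} (E : V → V → Prop) (ι o τ : V) :
    IsAppendageNode E ι o τ ↔
      (IsAppendageNode (prnAdj E) (ι, false) (o, true) (τ, false) ∧
       IsAppendageNode (prnAdj E) (ι, false) (o, true) (τ, true)) := by
  simp only [IsAppendageNode, isSimpleNode_prnAdj_iff, and_self]

/-- A node `τ` is an appendage node of the GRN if and only if both
`(τ,R)` and `(τ,P)` are appendage nodes of the PRN. -/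
theorem stmt_6 {V : Type*} [Fintype V] (E : V → V → Prop) (ι o τ : V) :
    IsAppendageNode E ι o τ ↔
      (IsAppendageNode (prnAdj E) (ι, false) (o, true) (τ, false) ∧
       IsAppendageNode (prnAdj E) (ι, false) (o, true) (τ, true)) :=
  stmt_6_general E ι o τ
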